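/- arXiv:2209.07438 — 2 statements merged into one kernel-verified Lean document; each statement's English description precedes it below -/
import Mathlib

section
/- With b = sin²(√σ T)·η²·(σ + 1/σ) + cos²(√σ T)·(1 + η⁴) for σ > 0, T real, η ∈ [0,1), one has 4η⁴ ≤ b², hence b² - 4η⁴ ≥ 0, and the spectral radius of AᵀA (A as in the transition matrix of partially-refreshed HMC on a 1-d quadratic) equals (b + √(b² - 4η⁴))/2. -/
/-!
`M = AᵀA` is symmetric with `det M = (det A)² = η⁴` (since `det A = η²`) and `tr M = b`, the sum of
the squared entries of `A`. Its eigenvalues are therefore the real roots of `μ² - bμ + η⁴`, and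
symmetry makes the discriminant `b² - 4η⁴ = (M₀₀ - M₁₁)² + 4M₀₁²` nonnegative, so the larger root
`(b + √(b² - 4η⁴))/2` is an eigenvalue and bounds every other one.
-/

open Real Matrix

namespace Matrix

theorem hasEigenvalue_toLin'_fin_two_iff {R : Type*} [CommRing R] [IsDomain R]
    (M : Matrix (Fin 2) (Fin 2) R) (μ : R) :
    Module.End.HasEigenvalue (toLin' M) μ ↔ μ ^ 2 - M.trace * μ + M.det = 0 := by
  rw [Module.End.hasEigenvalue_iff_isRoot_charpoly, charpoly_toLin', charpoly_fin_two]
  simp [Polynomial.IsRoot]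

theorem IsSymm.four_mul_det_le_trace_sq_fin_two {R : Type*} [CommRing R] [LinearOrder R]
    [IsStrictOrderedRing R] {M : Matrix (Fin 2) (Fin 2) R} (hM : M.IsSymm) :
    4 * M.det ≤ M.trace ^ 2 := by
  have h10 : M 1 0 = M 0 1 := by simpa using congrFun (congrFun hM 0) 1
  rw [det_fin_two, trace_fin_two, h10]
  nlinarith [sq_nonneg (M 0 0 - M 1 1), sq_nonneg (M 0 1)]

theorem IsSymm.hasEigenvalue_toLin'_fin_two_top {M : Matrix (Fin 2) (Fin 2) ℝ} (hM : M.IsSymm) :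
    Module.End.HasEigenvalue (toLin' M) ((M.trace + √(M.trace ^ 2 - 4 * M.det)) / 2) := by
  have hsq := sq_sqrt (sub_nonneg.2 hM.four_mul_det_le_trace_sq_fin_two)
  rw [hasEigenvalue_toLin'_fin_two_iff]
  linear_combination hsq / 4

theorem le_of_hasEigenvalue_toLin'_fin_two {M : Matrix (Fin 2) (Fin 2) ℝ} {r : ℝ}
    (hr : Module.End.HasEigenvalue (toLin' M) r) :
    r ≤ (M.trace + √(M.trace ^ 2 - 4 * M.det)) / 2 := by
  rw [hasEigenvalue_toLin'_fin_two_iff] at hr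
  have : |2 * r - M.trace| ≤ √(M.trace ^ 2 - 4 * M.det) :=
    abs_le_sqrt (by linear_combination 4 * hr)
  linarith [le_abs_self (2 * r - M.trace)]

end Matrix

/-- The transition matrix `A` of the statement, with `ω = √σ`. -/
noncomputable def hmcMatrix (ω η t : ℝ) : Matrix (Fin 2) (Fin 2) ℝ :=
  !![cos (ω * t), (η / ω) * sin (ω * t); -η * ω * sin (ω * t), η ^ 2 * cos (ω * t)]

theorem det_hmcMatrix {ω : ℝ} (hω : ω ≠ 0) (η t : ℝ) : (hmcMatrix ω η t).det = η ^ 2 := by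
  rw [hmcMatrix, det_fin_two_of]
  field_simp
  linear_combination η ^ 2 * sin_sq_add_cos_sq (ω * t)

theorem trace_transpose_mul_self_hmcMatrix {ω : ℝ} (hω : ω ≠ 0) (η t : ℝ) :
    ((hmcMatrix ω η t)ᵀ * hmcMatrix ω η t).trace =
      sin (ω * t) ^ 2 * η ^ 2 * (ω ^ 2 + 1 / ω ^ 2) + cos (ω * t) ^ 2 * (1 + η ^ 4) := by
  simp only [hmcMatrix, trace_fin_two, mul_apply, Fin.sum_univ_two, transpose_apply, of_apply,
    cons_val', cons_val_zero, cons_val_one, empty_val', cons_val_fin_one]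
  field_simp
  ring

theorem spectral_radius_HMC_transition_general (σ T η : ℝ) (hσ : 0 < σ) :
    4 * η ^ 4 ≤ (Real.sin (Real.sqrt σ * T) ^ 2 * η ^ 2 * (σ + 1 / σ) +
        Real.cos (Real.sqrt σ * T) ^ 2 * (1 + η ^ 4)) ^ 2 ∧
    Module.End.HasEigenvalue
      (Matrix.toLin'
        ((!![Real.cos (Real.sqrt σ * T), (η / Real.sqrt σ) * Real.sin (Real.sqrt σ * T);
             -η * Real.sqrt σ * Real.sin (Real.sqrt σ * T),
             η ^ 2 * Real.cos (Real.sqrt σ * T)] : Matrix (Fin 2) (Fin 2) ℝ)ᵀ *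
         !![Real.cos (Real.sqrt σ * T), (η / Real.sqrt σ) * Real.sin (Real.sqrt σ * T);
             -η * Real.sqrt σ * Real.sin (Real.sqrt σ * T),
             η ^ 2 * Real.cos (Real.sqrt σ * T)]))
      (((Real.sin (Real.sqrt σ * T) ^ 2 * η ^ 2 * (σ + 1 / σ) +
          Real.cos (Real.sqrt σ * T) ^ 2 * (1 + η ^ 4)) +
        Real.sqrt ((Real.sin (Real.sqrt σ * T) ^ 2 * η ^ 2 * (σ + 1 / σ) +
          Real.cos (Real.sqrt σ * T) ^ 2 * (1 + η ^ 4)) ^ 2 - 4 * η ^ 4)) / 2) ∧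
    ∀ r : ℝ,
      Module.End.HasEigenvalue
        (Matrix.toLin'
          ((!![Real.cos (Real.sqrt σ * T), (η / Real.sqrt σ) * Real.sin (Real.sqrt σ * T);
               -η * Real.sqrt σ * Real.sin (Real.sqrt σ * T),
               η ^ 2 * Real.cos (Real.sqrt σ * T)] : Matrix (Fin 2) (Fin 2) ℝ)ᵀ *
           !![Real.cos (Real.sqrt σ * T), (η / Real.sqrt σ) * Real.sin (Real.sqrt σ * T);
               -η * Real.sqrt σ * Real.sin (Real.sqrt σ * T),
               η ^ 2 * Real.cos (Real.sqrt σ * T)])) r →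
      r ≤ ((Real.sin (Real.sqrt σ * T) ^ 2 * η ^ 2 * (σ + 1 / σ) +
          Real.cos (Real.sqrt σ * T) ^ 2 * (1 + η ^ 4)) +
        Real.sqrt ((Real.sin (Real.sqrt σ * T) ^ 2 * η ^ 2 * (σ + 1 / σ) +
          Real.cos (Real.sqrt σ * T) ^ 2 * (1 + η ^ 4)) ^ 2 - 4 * η ^ 4)) / 2 := by
  set A := hmcMatrix √σ η T
  have hω : √σ ≠ 0 := (sqrt_pos.2 hσ).ne'
  have htr := trace_transpose_mul_self_hmcMatrix hω η T
  rw [sq_sqrt hσ.le] at htr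
  have hdet : (Aᵀ * A).det = η ^ 4 := by
    rw [det_mul, det_transpose, det_hmcMatrix hω]
    ring
  have hsymm : (Aᵀ * A).IsSymm := isSymm_transpose_mul_self A
  have hdisc := hsymm.four_mul_det_le_trace_sq_fin_two
  have htop := hsymm.hasEigenvalue_toLin'_fin_two_top
  have hle : ∀ r, Module.End.HasEigenvalue (toLin' (Aᵀ * A)) r → r ≤ _ :=
    fun r => le_of_hasEigenvalue_toLin'_fin_two
  rw [htr, hdet] at hdisc htop hle
  exact ⟨hdisc, htop, hle⟩

/-- `4η⁴ ≤ b²`, and the spectral radius of `AᵀA` (largest eigenvalue) equals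
`(b + √(b² - 4η⁴))/2`, for the partially refreshed HMC transition matrix on a
1-d quadratic. -/
theorem spectral_radius_HMC_transition (σ T η : ℝ) (hσ : 0 < σ) (hT : 0 < T)
    (hη : η ∈ Set.Ico (0 : ℝ) 1) :
    4 * η ^ 4 ≤ (Real.sin (Real.sqrt σ * T) ^ 2 * η ^ 2 * (σ + 1 / σ) +
        Real.cos (Real.sqrt σ * T) ^ 2 * (1 + η ^ 4)) ^ 2 ∧
    Module.End.HasEigenvalue
      (Matrix.toLin'
        ((!![Real.cos (Real.sqrt σ * T), (η / Real.sqrt σ) * Real.sin (Real.sqrt σ * T);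
             -η * Real.sqrt σ * Real.sin (Real.sqrt σ * T),
             η ^ 2 * Real.cos (Real.sqrt σ * T)] : Matrix (Fin 2) (Fin 2) ℝ)ᵀ *
         !![Real.cos (Real.sqrt σ * T), (η / Real.sqrt σ) * Real.sin (Real.sqrt σ * T);
             -η * Real.sqrt σ * Real.sin (Real.sqrt σ * T),
             η ^ 2 * Real.cos (Real.sqrt σ * T)]))
      (((Real.sin (Real.sqrt σ * T) ^ 2 * η ^ 2 * (σ + 1 / σ) +
          Real.cos (Real.sqrt σ * T) ^ 2 * (1 + η ^ 4)) +
        Real.sqrt ((Real.sin (Real.sqrt σ * T) ^ 2 * η ^ 2 * (σ + 1 / σ) +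
          Real.cos (Real.sqrt σ * T) ^ 2 * (1 + η ^ 4)) ^ 2 - 4 * η ^ 4)) / 2) ∧
    ∀ r : ℝ,
      Module.End.HasEigenvalue
        (Matrix.toLin'
          ((!![Real.cos (Real.sqrt σ * T), (η / Real.sqrt σ) * Real.sin (Real.sqrt σ * T);
               -η * Real.sqrt σ * Real.sin (Real.sqrt σ * T),
               η ^ 2 * Real.cos (Real.sqrt σ * T)] : Matrix (Fin 2) (Fin 2) ℝ)ᵀ *
           !![Real.cos (Real.sqrt σ * T), (η / Real.sqrt σ) * Real.sin (Real.sqrt σ * T);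
               -η * Real.sqrt σ * Real.sin (Real.sqrt σ * T),
               η ^ 2 * Real.cos (Real.sqrt σ * T)])) r →
      r ≤ ((Real.sin (Real.sqrt σ * T) ^ 2 * η ^ 2 * (σ + 1 / σ) +
          Real.cos (Real.sqrt σ * T) ^ 2 * (1 + η ^ 4)) +
        Real.sqrt ((Real.sin (Real.sqrt σ * T) ^ 2 * η ^ 2 * (σ + 1 / σ) +
          Real.cos (Real.sqrt σ * T) ^ 2 * (1 + η ^ 4)) ^ 2 - 4 * η ^ 4)) / 2 :=
  spectral_radius_HMC_transition_general σ T η hσ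
end

section
/- Let a, b, c, r ∈ ℝ with a, c > 0, ac - b² > 0, and let A = [[a, b],[b, c]] ⊗ I_d. Let S be the symmetric 2d×2d matrix S = [[2bH, (bδ - a)I + cH],[(bδ - a)I + cH, (cδ - 2b)I]] for a symmetric matrix μI ⪯ H ⪯ LI and scalar δ > 0. Then S ⪰ 2rA holds if and only if for every eigenvalue σ ∈ [μ, L] of H: (i) -2ra + 2bσ ≥ 0, (ii) -2rc + cδ - 2b ≥ 0, and (iii) (-2rb + bδ - a + cσ)² ≤ (-2ra + 2bσ)(-2rc + cδ - 2b). -/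
/-!
Diagonalize `H = U diag(σᵢ) Uᵀ`. Every block of the matrix in question is an affine
function `x • 1 + y • H` of `H`, so conjugating by the orthogonal matrix `diag(U, U)` turns all
four blocks into diagonal matrices simultaneously. The quadratic form of a `2 × 2` block matrix
with diagonal blocks splits into a sum of binary quadratic forms, one per eigenvalue `σᵢ`, and it
is nonnegative iff each of them is, i.e. iff each `2 × 2` coefficient matrix has nonnegative
diagonal and nonnegative determinant.
-/

open Matrix

theorem forall_quadratic_form_nonneg_iff (α β γ : ℝ) :
    (∀ s t : ℝ, 0 ≤ α * s ^ 2 + 2 * β * (s * t) + γ * t ^ 2) ↔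
      0 ≤ α ∧ 0 ≤ γ ∧ β ^ 2 ≤ α * γ := by
  constructor
  · intro h
    have hdisc : discrim α (2 * β) γ ≤ 0 :=
      discrim_le_zero fun s => by simpa [sq, mul_assoc] using h s 1
    refine ⟨by simpa using h 1 0, by simpa using h 0 1, ?_⟩
    rw [discrim] at hdisc
    linarith
  · rintro ⟨hα, hγ, hβ⟩ s t
    rcases hα.eq_or_lt with rfl | hα
    · obtain rfl : β = 0 := by nlinarith [sq_nonneg β]
      simpa using mul_nonneg hγ (sq_nonneg t)
    · have key : α * (α * s ^ 2 + 2 * β * (s * t) + γ * t ^ 2)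
          = (α * s + β * t) ^ 2 + (α * γ - β ^ 2) * t ^ 2 := by ring
      refine nonneg_of_mul_nonneg_right ?_ hα
      rw [key]
      nlinarith [sq_nonneg (α * s + β * t), sq_nonneg t]

namespace Matrix

variable {n : Type*} [Fintype n] [DecidableEq n]

theorem posSemidef_fromBlocks_diagonal_iff (p q r : n → ℝ) :
    (fromBlocks (diagonal p) (diagonal q) (diagonal q) (diagonal r)).PosSemidef ↔
      ∀ i, 0 ≤ p i ∧ 0 ≤ r i ∧ q i ^ 2 ≤ p i * r i := by
  have hform : ∀ u v : n → ℝ,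
      Sum.elim u v ⬝ᵥ (fromBlocks (diagonal p) (diagonal q) (diagonal q) (diagonal r) *ᵥ
        Sum.elim u v) = ∑ i, (p i * u i ^ 2 + 2 * q i * (u i * v i) + r i * v i ^ 2) := by
    intro u v
    rw [fromBlocks_mulVec, sumElim_dotProduct_sumElim]
    simp only [Sum.elim_comp_inl, Sum.elim_comp_inr, dotProduct, Pi.add_apply, mulVec_diagonal,
      ← Finset.sum_add_distrib]
    exact Finset.sum_congr rfl fun i _ => by ring
  simp only [posSemidef_iff_dotProduct_mulVec, ← forall_quadratic_form_nonneg_iff, star_trivial]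
  constructor
  · rintro ⟨-, h⟩ i s t
    have := h (Sum.elim (Pi.single i s) (Pi.single i t))
    rwa [hform, Fintype.sum_eq_single i fun j hj => by simp [Pi.single_eq_of_ne hj],
      Pi.single_eq_same, Pi.single_eq_same] at this
  · intro h
    refine ⟨by simp [IsHermitian, fromBlocks_transpose], fun x => ?_⟩
    rw [← Sum.elim_comp_inl_inr x, hform]
    exact Finset.sum_nonneg fun i _ => h i _ _

variable {R : Type*} [CommRing R] [PartialOrder R] [StarRing R]

theorem posSemidef_fromBlocks_unitary_conj_iff {U : Matrix n n R}
    (hU : U ∈ unitary (Matrix n n R)) (A B C D : Matrix n n R) :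
    (fromBlocks (U * A * star U) (U * B * star U) (U * C * star U) (U * D * star U)).PosSemidef ↔
      (fromBlocks A B C D).PosSemidef := by
  have hW : fromBlocks U 0 0 U * star (fromBlocks U 0 0 U) = 1 := by
    rw [star_eq_conjTranspose, fromBlocks_conjTranspose, fromBlocks_multiply,
      ← star_eq_conjTranspose, Unitary.mul_star_self_of_mem hU]
    simp
  have hconj : fromBlocks (U * A * star U) (U * B * star U) (U * C * star U) (U * D * star U)
      = fromBlocks U 0 0 U * fromBlocks A B C D * star (fromBlocks U 0 0 U) := by
    simp only [star_eq_conjTranspose]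
    rw [fromBlocks_conjTranspose, fromBlocks_multiply, fromBlocks_multiply]
    simp
  rw [hconj, ((isUnit_iff_isUnit_det _).mpr (isUnit_det_of_right_inverse hW))
    |>.posSemidef_star_right_conjugate_iff]

theorem IsHermitian.smul_one_add_smul_eq_conj_diagonal {H : Matrix n n ℝ} (hH : H.IsHermitian)
    (x y : ℝ) :
    x • 1 + y • H = (hH.eigenvectorUnitary : Matrix n n ℝ) *
      diagonal (fun i => x + y * hH.eigenvalues i) *
        star (hH.eigenvectorUnitary : Matrix n n ℝ) := by
  have hdiag : diagonal (fun i => x + y * hH.eigenvalues i)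
      = x • 1 + y • diagonal (RCLike.ofReal ∘ hH.eigenvalues) := by
    ext i j
    rcases eq_or_ne i j with rfl | hne <;> simp [*]
  conv_lhs => rw [hH.spectral_theorem]
  rw [hdiag, Unitary.conjStarAlgAut_apply]
  simp [mul_add, add_mul]

theorem IsHermitian.posSemidef_fromBlocks_smul_one_add_smul_iff {H : Matrix n n ℝ}
    (hH : H.IsHermitian) (p₀ p₁ q₀ q₁ r₀ r₁ : ℝ) :
    (Matrix.fromBlocks (p₀ • 1 + p₁ • H) (q₀ • 1 + q₁ • H) (q₀ • 1 + q₁ • H)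
      (r₀ • 1 + r₁ • H)).PosSemidef ↔
      ∀ σ ∈ spectrum ℝ H, 0 ≤ p₀ + p₁ * σ ∧ 0 ≤ r₀ + r₁ * σ ∧
        (q₀ + q₁ * σ) ^ 2 ≤ (p₀ + p₁ * σ) * (r₀ + r₁ * σ) := by
  simp only [hH.smul_one_add_smul_eq_conj_diagonal,
    posSemidef_fromBlocks_unitary_conj_iff hH.eigenvectorUnitary.2,
    posSemidef_fromBlocks_diagonal_iff, hH.spectrum_real_eq_range_eigenvalues, Set.forall_mem_range]

end Matrix

theorem lyapunov_condition_per_eigenvalue_general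
    (d : ℕ) (a b c r δ : ℝ)
    (H : Matrix (Fin d) (Fin d) ℝ) (hH : H.IsHermitian) :
    (Matrix.fromBlocks
        ((2 * b) • H) ((b * δ - a) • (1 : Matrix (Fin d) (Fin d) ℝ) + c • H)
        ((b * δ - a) • (1 : Matrix (Fin d) (Fin d) ℝ) + c • H)
        ((c * δ - 2 * b) • (1 : Matrix (Fin d) (Fin d) ℝ))
      - (2 * r) • Matrix.fromBlocks
          (a • (1 : Matrix (Fin d) (Fin d) ℝ)) (b • (1 : Matrix (Fin d) (Fin d) ℝ))
          (b • (1 : Matrix (Fin d) (Fin d) ℝ)) (c • (1 : Matrix (Fin d) (Fin d) ℝ))).PosSemidef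
      ↔ ∀ σ ∈ spectrum ℝ H,
          0 ≤ -(2 * r * a) + 2 * b * σ ∧
          0 ≤ -(2 * r * c) + c * δ - 2 * b ∧
          (-(2 * r * b) + b * δ - a + c * σ) ^ 2
            ≤ (-(2 * r * a) + 2 * b * σ) * (-(2 * r * c) + c * δ - 2 * b) := by
  convert hH.posSemidef_fromBlocks_smul_one_add_smul_iff (-(2 * r * a)) (2 * b)
    (-(2 * r * b) + b * δ - a) c (-(2 * r * c) + c * δ - 2 * b) 0 using 2
  · rw [Matrix.fromBlocks_smul, sub_eq_add_neg, Matrix.fromBlocks_neg, Matrix.fromBlocks_add]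
    congr 1 <;> module
  · simp only [zero_mul, add_zero]

/-- Reduction of the Lyapunov condition `S ⪰ 2rA` to per-eigenvalue `2×2`
positive-semidefiniteness conditions, for `A = [[a,b],[b,c]] ⊗ I` and the jump
process matrix `S`, where `H` is symmetric with `μI ⪯ H ⪯ LI`. -/
theorem lyapunov_condition_per_eigenvalue
    (d : ℕ) (a b c r μ L δ : ℝ) (ha : 0 < a) (hc : 0 < c) (hb : b ^ 2 < a * c)
    (hδ : 0 < δ)
    (H : Matrix (Fin d) (Fin d) ℝ) (hH : H.IsHermitian)
    (hμ : (H - μ • (1 : Matrix (Fin d) (Fin d) ℝ)).PosSemidef)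
    (hL : (L • (1 : Matrix (Fin d) (Fin d) ℝ) - H).PosSemidef) :
    (Matrix.fromBlocks
        ((2 * b) • H) ((b * δ - a) • (1 : Matrix (Fin d) (Fin d) ℝ) + c • H)
        ((b * δ - a) • (1 : Matrix (Fin d) (Fin d) ℝ) + c • H)
        ((c * δ - 2 * b) • (1 : Matrix (Fin d) (Fin d) ℝ))
      - (2 * r) • Matrix.fromBlocks
          (a • (1 : Matrix (Fin d) (Fin d) ℝ)) (b • (1 : Matrix (Fin d) (Fin d) ℝ))
          (b • (1 : Matrix (Fin d) (Fin d) ℝ)) (c • (1 : Matrix (Fin d) (Fin d) ℝ))).PosSemidef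
      ↔ ∀ σ ∈ spectrum ℝ H,
          0 ≤ -(2 * r * a) + 2 * b * σ ∧
          0 ≤ -(2 * r * c) + c * δ - 2 * b ∧
          (-(2 * r * b) + b * δ - a + c * σ) ^ 2
            ≤ (-(2 * r * a) + 2 * b * σ) * (-(2 * r * c) + c * δ - 2 * b) :=
  lyapunov_condition_per_eigenvalue_general d a b c r δ H hH
end
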